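/- The intersection over all permutations σ ∈ S_N of the iterated Laurent series rings ℂ((z_{σ(1)}))((z_{σ(2)}))⋯((z_{σ(N)})) (each viewed inside the space of formal doubly-infinite series ℂ[[z₁^{±1},…,z_N^{±1}]]) equals ℂ[[z₁,…,z_N]][z₁⁻¹,…,z_N⁻¹]. -/
import Mathlib


/-- Membership in the iterated Laurent series ring `ℂ((z₁))((z₂))⋯((z_N))` (with `z_N`
outermost), for a doubly-infinite formal series given by its coefficient function
`(Fin N → ℤ) → ℂ`: the exponents of the last variable are uniformly bounded below, and
each slice (fixing the exponent of the last variable) again lies in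
`ℂ((z₁))⋯((z_{N-1}))`. -/
def InIterLaurent : ∀ (N : ℕ), ((Fin N → ℤ) → ℂ) → Prop
  | 0, _ => True
  | N + 1, f =>
      (∃ M : ℤ, ∀ v : Fin (N + 1) → ℤ, v (Fin.last N) < M → f v = 0) ∧
      ∀ k : ℤ, InIterLaurent N (fun u => f (Fin.snoc u k))

/-- Any series whose support is uniformly bounded below in every variable lies in the
iterated Laurent series ring. -/
lemma inIterLaurent_of_bdd : ∀ (N : ℕ) (f : (Fin N → ℤ) → ℂ) (M : ℤ),
    (∀ v, (∃ p, v p < M) → f v = 0) → InIterLaurent N f := by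
  intro N
  induction N with
  | zero => intro f M h; trivial
  | succ N ih =>
    intro f M h
    exact ⟨⟨M, fun v hv => h v ⟨Fin.last N, hv⟩⟩,
      fun k => ih _ M fun u ⟨p, hp⟩ => h _ ⟨p.castSucc, by simpa using hp⟩⟩

/-- The intersection over all permutations `σ ∈ S_N` of the iterated Laurent series rings
`ℂ((z_{σ(1)}))⋯((z_{σ(N)}))`, inside `ℂ[[z₁^{±1},…,z_N^{±1}]]`, equals
`ℂ[[z₁,…,z_N]][z₁⁻¹,…,z_N⁻¹]`, i.e. the series whose support is uniformly bounded below
in every variable. -/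
theorem inter_iterated_Laurent_eq (N : ℕ) (f : (Fin N → ℤ) → ℂ) :
    (∀ σ : Equiv.Perm (Fin N), InIterLaurent N (fun v => f (v ∘ σ))) ↔
      ∃ M : ℤ, ∀ v : Fin N → ℤ, (∃ p, v p < M) → f v = 0 := by
  constructor
  · intro h
    cases N with
    | zero => exact ⟨0, fun v ⟨p, _⟩ => p.elim0⟩
    | succ N =>
      have key : ∀ p : Fin (N + 1), ∃ Mp : ℤ, ∀ w, w p < Mp → f w = 0 := by
        intro p
        obtain ⟨Mp, hMp⟩ := (h (Equiv.swap p (Fin.last N))).1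
        refine ⟨Mp, fun w hw => ?_⟩
        have := hMp (w ∘ Equiv.swap p (Fin.last N))
          (by simpa [Function.comp, Equiv.swap_apply_right] using hw)
        have hc : (w ∘ ⇑(Equiv.swap p (Fin.last N))) ∘ ⇑(Equiv.swap p (Fin.last N)) = w :=
          funext fun i => congrArg w (Equiv.swap_apply_self _ _ _)
        simpa [hc] using this
      choose Mp hMp using key
      refine ⟨Finset.univ.inf' ⟨Fin.last N, Finset.mem_univ _⟩ Mp, fun v ⟨p, hp⟩ =>
        hMp p v (lt_of_lt_of_le hp (Finset.inf'_le _ (Finset.mem_univ p)))⟩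
  · rintro ⟨M, hM⟩ σ
    exact inIterLaurent_of_bdd N _ M fun v ⟨p, hp⟩ =>
      hM _ ⟨σ.symm p, by simpa using hp⟩
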